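/- arXiv:1309.6425 — 3 statements merged into one kernel-verified Lean document; each statement's English description precedes it below -/
import Mathlib

section
/- Let H, ·, c₁, d, g be as in the adjunction setup (values in ℤ, with A·A − c₁(A) even). Suppose A, Z, B ∈ H satisfy A = Z + B, A·Z ≥ 0, B·(A−B) > 0, g(A) = 0 and g(B) ≥ 0. Then d(B) < d(A). -/
/-- Li–Zhang type degree inequality: if the genus-zero class `A` decomposes
as `A = Z + B` with `A·Z ≥ 0`, `B·(A−B) > 0` and `g(B) ≥ 0`, then `d(B) < d(A)`. -/
theorem genus_zero_degree_inequality
    (H : Type*) [AddCommGroup H]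
    (ip : H →+ H →+ ℤ) (hsymm : ∀ x y, ip x y = ip y x)
    (c₁ : H →+ ℤ)
    (A Z B : H) (gA gB : ℤ)
    (hgA : 2 * gA = 2 + (ip A A - c₁ A))
    (hgB : 2 * gB = 2 + (ip B B - c₁ B))
    (hdec : A = Z + B)
    (hAZ : 0 ≤ ip A Z)
    (hBAB : 0 < ip B (A - B))
    (hgA0 : gA = 0) (hgB0 : 0 ≤ gB) :
    ip B B + c₁ B < ip A A + c₁ A := by
  have e1 : ip A A = ip A Z + ip A B := by
    nth_rewrite 2 [hdec]
    exact map_add (ip A) Z B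
  have e2 : ip B (A - B) = ip B A - ip B B := map_sub (ip B) A B
  have e3 : ip A B = ip B A := hsymm A B
  linarith
end

section
/- Let H, ·, c₁, d, g be as in the adjunction setup. Suppose A, Z, B₀ ∈ H and n ≥ 1 an integer satisfy: B₀·B₀ = 0, c₁(B₀) = 2, A = Z + nB₀, A·Z ≥ 0, (nB₀)·(A − nB₀) ≥ n, and g(A) = 0. Then d(nB₀) = 2n and d(A) = 2 + 2(A·A) > 2n, so d(nB₀) < d(A). -/
/-- Multiple-sphere case of the Li–Zhang degree inequality: if `A = Z + n B₀`
with `B₀² = 0`, `c₁(B₀) = 2`, `A·Z ≥ 0`, `(nB₀)·(A − nB₀) ≥ n` and `g(A) = 0`,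
then `d(nB₀) = 2n`, `d(A) = 2 + 2A² > 2n`, so `d(nB₀) < d(A)`. -/
theorem multiple_sphere_degree_inequality
    (H : Type*) [AddCommGroup H]
    (ip : H →+ H →+ ℤ) (hsymm : ∀ x y, ip x y = ip y x)
    (c₁ : H →+ ℤ)
    (A Z B₀ : H) (n : ℤ) (hn : 1 ≤ n)
    (hB₀ : ip B₀ B₀ = 0) (hcB₀ : c₁ B₀ = 2)
    (hdec : A = Z + n • B₀)
    (hAZ : 0 ≤ ip A Z)
    (hBAB : n ≤ ip (n • B₀) (A - n • B₀))
    (gA : ℤ) (hgA : 2 * gA = 2 + (ip A A - c₁ A)) (hgA0 : gA = 0) :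
    ip (n • B₀) (n • B₀) + c₁ (n • B₀) = 2 * n ∧
    ip A A + c₁ A = 2 + 2 * ip A A ∧
    2 * n < 2 + 2 * ip A A := by
  have h1 : ip (n • B₀) (n • B₀) + c₁ (n • B₀) = 2 * n := by
    simp [map_zsmul, hB₀, hcB₀]; ring
  have hc : c₁ A = 2 + ip A A := by omega
  have hBA : n ≤ n * ip B₀ A := by
    have := hBAB
    simp only [map_zsmul, map_sub, AddMonoidHom.smul_apply, smul_eq_mul, hB₀,
      mul_zero, sub_zero] at this
    exact this
  have hAB : ip A B₀ = ip B₀ A := hsymm A B₀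
  have hA : ip A A = ip A Z + n * ip B₀ A := by
    calc ip A A = ip A (Z + n • B₀) := by rw [← hdec]
    _ = ip A Z + n * ip A B₀ := by simp [smul_eq_mul]
    _ = ip A Z + n * ip B₀ A := by rw [hAB]
  refine ⟨h1, by omega, ?_⟩
  omega
end

section
/- Let H, ·, c₁, d be as in the degree setup. Suppose A, Z, B ∈ H and E₁,…,E_r ∈ H with c₁(Z) = 0, c₁(E_j) = 1 for all j, and integers n_j ≥ 0, satisfy A = Z + Σ_j n_j E_j + B, Z·A ≥ 0, E_j·A ≥ 0 for all j, and B·(A−B) > 0. Then d(A) − d(B) > Z·A + Σ_j n_j ≥ 0; in particular d(B) < d(A). -/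
/-- Biran-type degree inequality (Lemma 3.12): if `A = Z + Σ nⱼ Eⱼ + B` with
`c₁(Z) = 0`, `c₁(Eⱼ) = 1`, `nⱼ ≥ 0`, `Z·A ≥ 0`, `Eⱼ·A ≥ 0` and `B·(A−B) > 0`,
then `d(A) − d(B) > Z·A + Σ nⱼ ≥ 0`; in particular `d(B) < d(A)`. -/
theorem biran_degree_inequality
    (H : Type*) [AddCommGroup H]
    (ip : H →+ H →+ ℤ) (hsymm : ∀ x y, ip x y = ip y x)
    (c₁ : H →+ ℤ)
    (r : ℕ) (A Z B : H) (E : Fin r → H) (n : Fin r → ℤ)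
    (hcZ : c₁ Z = 0) (hcE : ∀ j, c₁ (E j) = 1) (hn : ∀ j, 0 ≤ n j)
    (hdec : A = Z + (∑ j, n j • E j) + B)
    (hZA : 0 ≤ ip Z A) (hEA : ∀ j, 0 ≤ ip (E j) A)
    (hBAB : 0 < ip B (A - B)) :
    ip Z A + ∑ j, n j < (ip A A + c₁ A) - (ip B B + c₁ B) ∧
    0 ≤ ip Z A + ∑ j, n j ∧
    ip B B + c₁ B < ip A A + c₁ A := by
  have hW : A - B = Z + ∑ j, n j • E j := by rw [hdec]; abel
  have h1 : ip (A - B) A = ip A A - ip B A := by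
    rw [map_sub]; rfl
  have h2 : ip B (A - B) = ip B A - ip B B := by
    rw [map_sub]
  have h3 : ip (A - B) A = ip Z A + ∑ j, n j * ip (E j) A := by
    rw [hW, map_add, map_sum]
    simp [map_zsmul, smul_eq_mul]
  have h4 : c₁ A - c₁ B = ∑ j, n j := by
    rw [← map_sub, hW, map_add, map_sum, hcZ]
    simp [hcE]
  have h5 : (0:ℤ) ≤ ∑ j, n j * ip (E j) A :=
    Finset.sum_nonneg fun j _ => mul_nonneg (hn j) (hEA j)
  have h6 : (0:ℤ) ≤ ∑ j, n j := Finset.sum_nonneg fun j _ => hn j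
  refine ⟨by linarith, by linarith, by linarith⟩
end
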